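/- Let $1<p<2$ and $\tilde\omega$ as in the Felli–Zhang decomposition: $\tilde\omega(x,x+y)=\big(\frac{|x+y|}{(2-p)|x+y|+(p-1)|x|}\big)^{1/(p-2)}x$ if $|x|<|x+y|$, and $\tilde\omega(x,x+y)=x$ otherwise. Then $|\tilde\omega(x,x+y)|^{p-2}\le\frac{|x|^{p-2}}{2-p}$ for all $x\ne0$ and $y\in\mathbb{R}^N$. -/

import Mathlib

lemma div_le_one_div_two_sub {p a b : ℝ} (hp1 : 1 ≤ p) (hp2 : p < 2) (ha : 0 < a) (hb : 0 ≤ b) :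
    a / ((2 - p) * a + (p - 1) * b) ≤ 1 / (2 - p) := by
  have h2p : 0 < 2 - p := by linarith
  have hpb : 0 ≤ (p - 1) * b := mul_nonneg (by linarith) hb
  rw [div_le_div_iff₀ (by positivity) h2p]
  nlinarith

lemma norm_rpow_one_div_smul_rpow {E : Type*} [NormedAddCommGroup E] [NormedSpace ℝ E]
    {r q : ℝ} (hr : 0 ≤ r) (hq : q ≠ 0) (x : E) :
    ‖r ^ (1 / q) • x‖ ^ q = r * ‖x‖ ^ q := by
  rw [norm_smul, Real.norm_of_nonneg (by positivity), Real.mul_rpow (by positivity) (norm_nonneg x),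
    one_div, Real.rpow_inv_rpow hr hq]

theorem tilde_omega_upper_bound_general (N : ℕ) (p : ℝ) (hp1 : 1 < p) (hp2 : p < 2)
    (x y : EuclideanSpace ℝ (Fin N)) :
    let w : EuclideanSpace ℝ (Fin N) :=
      if ‖x‖ < ‖x + y‖ then
        ((‖x + y‖ / ((2 - p) * ‖x + y‖ + (p - 1) * ‖x‖)) ^ ((1 : ℝ) / (p - 2))) • x
      else x
    ‖w‖ ^ (p - 2) ≤ ‖x‖ ^ (p - 2) / (2 - p) := by
  intro w
  have h2p : 0 < 2 - p := by linarith
  have hpow : 0 ≤ ‖x‖ ^ (p - 2) := by positivity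
  simp only [w]
  split_ifs with hlt
  · have hpos : 0 < ‖x + y‖ := (norm_nonneg x).trans_lt hlt
    rw [norm_rpow_one_div_smul_rpow (by positivity) (by linarith : p - 2 ≠ 0)]
    exact (mul_le_mul_of_nonneg_right
      (div_le_one_div_two_sub hp1.le hp2 hpos (norm_nonneg x)) hpow).trans_eq
      (one_div_mul_eq_div _ _)
  · exact le_div_self hpow h2p (by linarith)

theorem tilde_omega_upper_bound (N : ℕ) (hN : 1 ≤ N) (p : ℝ) (hp1 : 1 < p) (hp2 : p < 2)
    (x y : EuclideanSpace ℝ (Fin N)) (hx : x ≠ 0) :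
    let w : EuclideanSpace ℝ (Fin N) :=
      if ‖x‖ < ‖x + y‖ then
        ((‖x + y‖ / ((2 - p) * ‖x + y‖ + (p - 1) * ‖x‖)) ^ ((1 : ℝ) / (p - 2))) • x
      else x
    ‖w‖ ^ (p - 2) ≤ ‖x‖ ^ (p - 2) / (2 - p) :=
  tilde_omega_upper_bound_general N p hp1 hp2 x y
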